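/- Let w_1, …, w_ℓ be positive integers with ∑_{j∈[ℓ]} w_j = 2t and w_j < t for every j. Construct the fair-division-with-social-impact instance with two agents a_1, a_2 and items g_1, …, g_ℓ, G_1, G_2, where for both agents v(g_j) = w_j and s(g_j) = 1; v_{a_1}(G_1) = 0, s_{a_1}(G_1) = 1, v_{a_2}(G_1) = t, s_{a_2}(G_1) = 0; and v_{a_1}(G_2) = t, s_{a_1}(G_2) = 0, v_{a_2}(G_2) = 0, s_{a_2}(G_2) = 1. Then this instance admits an allocation that is simultaneously SIM and EF1 if and only if there exists J ⊆ [ℓ] with ∑_{j∈J} w_j = t. -/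

import Mathlib

/-!
SIM forces agent `a₁` to take `G₁` and agent `a₂` to take `G₂`. Each agent then sees a
surplus of `t` in the other bundle, and since no item is worth more than `t`, EF1 in both
directions forces the two shares of the `g_j` to have equal weight, i.e. weight `t` each.
Conversely, giving `J ∪ {G₁}` to `a₁` and the rest to `a₂` makes every envy vanish after
removing the other agent's `G`.
-/

open Finset

variable {N M : Type*}

/-- The bundle of agent `i` under allocation `A` (items mapped to `i`). -/
def bundle [Fintype M] [DecidableEq N] (A : M → N) (i : N) : Finset M :=
  Finset.univ.filter fun g => A g = i

/-- The (additive) value of a bundle `S` under the item-values `f`. -/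
def val (f : M → ℕ) (S : Finset M) : ℕ := ∑ g ∈ S, f g

/-- An allocation is social impact maximizing (SIM). -/
def SIM [Fintype N] [Fintype M] [DecidableEq N] (s : N → M → ℕ) (A : M → N) : Prop :=
  ∀ A' : M → N, ∑ i : N, val (s i) (bundle A i) ≥ ∑ i : N, val (s i) (bundle A' i)

/-- An allocation is envy-free up to one item (EF1). -/
def EF1 [Fintype M] [DecidableEq N] [DecidableEq M] (v : N → M → ℕ) (A : M → N) : Prop :=
  ∀ i j : N, ∃ g : M, val (v i) (bundle A i) ≥ val (v i) ((bundle A j).erase g)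

section General

variable {α β : Type*}

lemma mem_bundle [Fintype M] [DecidableEq N] {A : M → N} {i : N} {g : M} :
    g ∈ bundle A i ↔ A g = i := by
  simp [bundle]

lemma sum_val_bundle [Fintype M] [Fintype N] [DecidableEq N] (A : M → N) (f : N → M → ℕ) :
    ∑ i : N, val (f i) (bundle A i) = ∑ g : M, f (A g) g := by
  rw [← Finset.sum_fiberwise Finset.univ A fun g => f (A g) g]
  exact Finset.sum_congr rfl fun i _ => Finset.sum_congr rfl fun g hg => by
    rw [(Finset.mem_filter.1 hg).2]

lemma val_bundle_sum [Fintype α] [Fintype β] [DecidableEq N] (f : α ⊕ β → ℕ)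
    (A : α ⊕ β → N) (i : N) :
    val f (bundle A i) =
      val (f ∘ Sum.inl) (bundle (A ∘ Sum.inl) i) +
        val (f ∘ Sum.inr) (bundle (A ∘ Sum.inr) i) := by
  simp only [_root_.val, bundle, Finset.sum_filter, Fintype.sum_sum_type, Function.comp_apply]

lemma val_bundle_id [Fintype N] [DecidableEq N] (f : N → ℕ) (i : N) :
    val f (bundle id i) = f i := by
  simp [_root_.val, bundle, Finset.filter_eq']

lemma val_erase_add [DecidableEq M] (f : M → ℕ) {S : Finset M} {g : M} (hg : g ∈ S) :
    val f (S.erase g) + f g = val f S :=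
  Finset.sum_erase_add S f hg

lemma val_le_val_erase_add [DecidableEq M] (f : M → ℕ) (S : Finset M) (g : M) :
    val f S ≤ val f (S.erase g) + f g := by
  by_cases hg : g ∈ S
  · exact (val_erase_add f hg).ge
  · rw [Finset.erase_eq_of_notMem hg]
    exact Nat.le_add_right _ _

lemma val_erase_le [DecidableEq M] (f : M → ℕ) (S : Finset M) (g : M) :
    val f (S.erase g) ≤ val f S :=
  Finset.sum_le_sum_of_subset (Finset.erase_subset g S)

lemma EF1.val_bundle_le_add [Fintype M] [DecidableEq N] [DecidableEq M] {v : N → M → ℕ}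
    {A : M → N} (h : EF1 v A) {i : N} {c : ℕ} (hc : ∀ g, v i g ≤ c) (j : N) :
    val (v i) (bundle A j) ≤ val (v i) (bundle A i) + c := by
  obtain ⟨g, hg⟩ := h i j
  calc val (v i) (bundle A j) ≤ val (v i) ((bundle A j).erase g) + v i g :=
        val_le_val_erase_add _ _ _
    _ ≤ val (v i) (bundle A i) + c := Nat.add_le_add hg (hc g)

end General

section PartitionInstance

variable {ℓ : ℕ}

/-- Item `Sum.inl j` is `g_j` and item `Sum.inr k` is `G_{k+1}`; agent `k` is `a_{k+1}`. -/
def partitionImpact (ℓ : ℕ) (i : Fin 2) : Fin ℓ ⊕ Fin 2 → ℕ :=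
  Sum.elim (fun _ => 1) fun k => if k = i then 1 else 0

def partitionValue (w : Fin ℓ → ℕ) (t : ℕ) (i : Fin 2) : Fin ℓ ⊕ Fin 2 → ℕ :=
  Sum.elim (fun j => w j) fun k => if k = i then 0 else t

lemma sum_val_partitionImpact (A : Fin ℓ ⊕ Fin 2 → Fin 2) :
    ∑ i, val (partitionImpact ℓ i) (bundle A i) = ℓ + #{k | A (Sum.inr k) = k} := by
  simp [sum_val_bundle, Fintype.sum_sum_type, partitionImpact, eq_comm (b := A _)]

/-- Only the two items `G_k` carry agent-dependent impact, and each earns `1` exactly with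
agent `k`. -/
lemma sim_partitionImpact_iff (A : Fin ℓ ⊕ Fin 2 → Fin 2) :
    SIM (partitionImpact ℓ) A ↔ A ∘ Sum.inr = id := by
  have hcount (A' : Fin ℓ ⊕ Fin 2 → Fin 2) :
      #{k | A' (Sum.inr k) = k} ≤ #(univ : Finset (Fin 2)) :=
    card_filter_le _ _
  simp only [SIM, ge_iff_le, sum_val_partitionImpact, add_le_add_iff_left]
  constructor
  · intro h
    have hall := card_filter_eq_iff.1 <|
      (hcount A).antisymm (by simpa using h (Sum.elim (fun _ => 0) id))
    funext k
    exact hall k (mem_univ k)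
  · intro hA A'
    rw [filter_true_of_mem (p := fun k => A (Sum.inr k) = k) fun k _ => congrFun hA k]
    exact hcount A'

lemma val_partitionValue_bundle (w : Fin ℓ → ℕ) (t : ℕ) {A : Fin ℓ ⊕ Fin 2 → Fin 2}
    (hA : A ∘ Sum.inr = id) (i k : Fin 2) :
    val (partitionValue w t i) (bundle A k) =
      val w (bundle (A ∘ Sum.inl) k) + if k = i then 0 else t := by
  rw [val_bundle_sum, hA, val_bundle_id]
  rfl

lemma partitionValue_le {w : Fin ℓ → ℕ} {t : ℕ} (hwt : ∀ j, w j ≤ t) (i : Fin 2)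
    (g : Fin ℓ ⊕ Fin 2) : partitionValue w t i g ≤ t := by
  rcases g with j | k
  · exact hwt j
  · simp only [partitionValue, Sum.elim_inr]
    split_ifs <;> omega

lemma val_bundle_zero_add_val_bundle_one (w : Fin ℓ → ℕ) (B : Fin ℓ → Fin 2) :
    val w (bundle B 0) + val w (bundle B 1) = ∑ j, w j := by
  simpa [Fin.sum_univ_two] using sum_val_bundle B fun _ => w

lemma exists_partition_of_sim_ef1 {w : Fin ℓ → ℕ} {t : ℕ} (hsum : ∑ j, w j = 2 * t)
    (hwt : ∀ j, w j ≤ t) {A : Fin ℓ ⊕ Fin 2 → Fin 2} (hS : SIM (partitionImpact ℓ) A)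
    (hE : EF1 (partitionValue w t) A) : ∃ J : Finset (Fin ℓ), ∑ j ∈ J, w j = t := by
  have hA := (sim_partitionImpact_iff A).1 hS
  have envy (i j : Fin 2) := hE.val_bundle_le_add (partitionValue_le hwt i) j
  have h01 := envy 0 1
  have h10 := envy 1 0
  simp only [val_partitionValue_bundle w t hA, Fin.reduceEq, if_true, if_false] at h01 h10
  have htot := val_bundle_zero_add_val_bundle_one w (A ∘ Sum.inl)
  exact ⟨bundle (A ∘ Sum.inl) 0, by change val w _ = t; omega⟩

lemma sim_ef1_of_partition {w : Fin ℓ → ℕ} {t : ℕ} (hsum : ∑ j, w j = 2 * t)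
    {J : Finset (Fin ℓ)} (hJ : ∑ j ∈ J, w j = t) :
    SIM (partitionImpact ℓ) (Sum.elim (fun j => if j ∈ J then 0 else 1) id) ∧
      EF1 (partitionValue w t) (Sum.elim (fun j => if j ∈ J then 0 else 1) id) := by
  set A : Fin ℓ ⊕ Fin 2 → Fin 2 := Sum.elim (fun j => if j ∈ J then 0 else 1) id
  have hA : A ∘ Sum.inr = id := rfl
  have hJ0 : bundle (A ∘ Sum.inl) 0 = J := by
    ext j
    by_cases hj : j ∈ J <;> simp [mem_bundle, A, hj]
  have hweight (k : Fin 2) : val w (bundle (A ∘ Sum.inl) k) = t := by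
    have htot := val_bundle_zero_add_val_bundle_one w (A ∘ Sum.inl)
    have h0 : val w (bundle (A ∘ Sum.inl) 0) = t := by rw [hJ0]; exact hJ
    fin_cases k <;> simp only [Fin.zero_eta, Fin.mk_one] <;> omega
  refine ⟨(sim_partitionImpact_iff A).2 hA, fun i j => ?_⟩
  by_cases hij : j = i
  · subst hij
    exact ⟨Sum.inr j, val_erase_le _ _ _⟩
  · -- removing `G_j`, worth `t` to agent `i`, leaves exactly `t`
    refine ⟨Sum.inr j, ?_⟩
    have hmem : (Sum.inr j : Fin ℓ ⊕ Fin 2) ∈ bundle A j := mem_bundle.2 rfl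
    have hG : partitionValue w t i (Sum.inr j) = t := by simp [partitionValue, hij]
    have herase := val_erase_add (partitionValue w t i) hmem
    rw [hG, val_partitionValue_bundle w t hA, hweight, if_neg hij] at herase
    rw [ge_iff_le, val_partitionValue_bundle w t hA, hweight, if_pos rfl]
    omega

end PartitionInstance

theorem sim_ef1_iff_partition_general (ℓ t : ℕ) (w : Fin ℓ → ℕ)
    (hsum : ∑ j, w j = 2 * t) (hwt : ∀ j, w j < t) :
    (∃ A : (Fin ℓ ⊕ Fin 2) → Fin 2,
        SIM (fun i => Sum.elim (fun _ : Fin ℓ => 1)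
              (fun k : Fin 2 => if k = i then 1 else 0)) A ∧
        EF1 (fun i => Sum.elim (fun j : Fin ℓ => w j)
              (fun k : Fin 2 => if k = i then 0 else t)) A) ↔
    (∃ J : Finset (Fin ℓ), ∑ j ∈ J, w j = t) := by
  constructor
  · rintro ⟨A, hS, hE⟩
    exact exists_partition_of_sim_ef1 hsum (fun j => (hwt j).le) hS hE
  · rintro ⟨J, hJ⟩
    exact ⟨_, sim_ef1_of_partition hsum hJ⟩

/-- Partition reduction instance: two agents `0 = a₁`, `1 = a₂`, items
`Sum.inl j = g_j` (value `w j`, impact `1` for both) and `Sum.inr k = G_{k+1}`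
(`v_{a₁}(G₁) = 0, s_{a₁}(G₁) = 1, v_{a₂}(G₁) = t, s_{a₂}(G₁) = 0` and
`v_{a₁}(G₂) = t, s_{a₁}(G₂) = 0, v_{a₂}(G₂) = 0, s_{a₂}(G₂) = 1`).
A SIM and EF1 allocation exists iff the integers `w` can be partitioned. -/
theorem sim_ef1_iff_partition (ℓ t : ℕ) (w : Fin ℓ → ℕ)
    (hw : ∀ j, 0 < w j) (hsum : ∑ j, w j = 2 * t) (hwt : ∀ j, w j < t) :
    (∃ A : (Fin ℓ ⊕ Fin 2) → Fin 2,
        SIM (fun i => Sum.elim (fun _ : Fin ℓ => 1)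
              (fun k : Fin 2 => if k = i then 1 else 0)) A ∧
        EF1 (fun i => Sum.elim (fun j : Fin ℓ => w j)
              (fun k : Fin 2 => if k = i then 0 else t)) A) ↔
    (∃ J : Finset (Fin ℓ), ∑ j ∈ J, w j = t) :=
  sim_ef1_iff_partition_general ℓ t w hsum hwt
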